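/- arXiv:1710.03514 — 7 statements merged into one kernel-verified Lean document; each statement's English description precedes it below -/
import Mathlib

section
/- Let λ be a symplectic partition of 2m. Define P^+(λ) as the set of odd indices j ≥ 1 such that λ_j is even and λ_{j-1} > λ_j (with the convention λ_0 = ∞), and P^-(λ) as the set of even indices j ≥ 2 such that λ_j is even and λ_j > λ_{j+1}. Then |P^+(λ)| = |P^-(λ)| + 1, and writing P^+(λ) = {p⁺_1 < ... < p⁺_{a+1}} and P^-(λ) = {p⁻_1 < ... < p⁻_a}, the elements interleave: p⁺_1 < p⁻_1 < p⁺_2 < p⁻_2 < ... < p⁺_a < p⁻_a < p⁺_{a+1}. -/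
open Classical

noncomputable section

/-- A partition: weakly decreasing on indices `j ≥ 1` (parts are `l 1 ≥ l 2 ≥ ...`). -/
def IsPartition (l : ℕ → ℕ) : Prop := ∀ j, 1 ≤ j → l (j + 1) ≤ l j

/-- The parts vanish eventually (finitely many nonzero parts). -/
def EventuallyZero (l : ℕ → ℕ) : Prop := ∃ N, ∀ j, N ≤ j → l j = 0

/-- Multiplicity of `i` as a part of `l`. -/
def mult (l : ℕ → ℕ) (i : ℕ) : ℕ := Nat.card {j : ℕ | 1 ≤ j ∧ l j = i}

/-- The sum of the parts of `l`. -/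
def psum (l : ℕ → ℕ) : ℕ := ∑ᶠ j : ℕ, l (j + 1)

/-- Symplectic: every odd part occurs with even multiplicity. -/
def IsSymplectic (l : ℕ → ℕ) : Prop := ∀ i, Odd i → Even (mult l i)

/-- Orthogonal: every even positive part occurs with even multiplicity. -/
def IsOrthogonal (l : ℕ → ℕ) : Prop := ∀ i, 0 < i → Even i → Even (mult l i)

/-- Special: `l (2j-1)` and `l (2j)` have the same parity for all `j ≥ 1`. -/
def IsSpecial (l : ℕ → ℕ) : Prop := ∀ j, 1 ≤ j → l (2 * j - 1) % 2 = l (2 * j) % 2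

/-- `P^+(λ)`: odd `j` with `λ_j` even and `λ_{j-1} > λ_j` (convention `λ_0 = ∞`). -/
def Pplus (l : ℕ → ℕ) : Set ℕ := {j | Odd j ∧ Even (l j) ∧ (j = 1 ∨ l (j - 1) > l j)}

/-- `P^-(λ)`: even `j ≥ 2` with `λ_j` even and `λ_j > λ_{j+1}`. -/
def Pminus (l : ℕ → ℕ) : Set ℕ := {j | 2 ≤ j ∧ Even j ∧ Even (l j) ∧ l j > l (j + 1)}

/-- `Q^+(λ)`: even `j ≥ 2` with `λ_j` odd and `λ_{j-1} > λ_j`. -/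
def Qplus (l : ℕ → ℕ) : Set ℕ := {j | 2 ≤ j ∧ Even j ∧ Odd (l j) ∧ l (j - 1) > l j}

/-- `Q^-(λ)`: odd `j ≥ 1` with `λ_j` odd and `λ_j > λ_{j+1}`. -/
def Qminus (l : ℕ → ℕ) : Set ℕ := {j | Odd j ∧ Odd (l j) ∧ l j > l (j + 1)}

/-- Orthogonal version of `P^+`: odd `j` with `λ_j` odd and `λ_{j-1} > λ_j` (`λ_0 = ∞`). -/
def PplusO (l : ℕ → ℕ) : Set ℕ := {j | Odd j ∧ Odd (l j) ∧ (j = 1 ∨ l (j - 1) > l j)}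

/-- Orthogonal version of `P^-`: even `j ≥ 2` with `λ_j` odd and `λ_j > λ_{j+1}`. -/
def PminusO (l : ℕ → ℕ) : Set ℕ := {j | 2 ≤ j ∧ Even j ∧ Odd (l j) ∧ l j > l (j + 1)}

/-- The sequence `s(λ)`: `1` on `Q^+`, `-1` on `Q^-`, `0` elsewhere. -/
def sSeq (l : ℕ → ℕ) (j : ℕ) : ℤ :=
  if j ∈ Qplus l then 1 else if j ∈ Qminus l then -1 else 0

/-- The sequence `ζ(λ)`: `1` on `P^+`, `-1` on `P^-`, `0` elsewhere. -/
def zSeq (l : ℕ → ℕ) (j : ℕ) : ℤ :=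
  if j ∈ Pplus l then 1 else if j ∈ Pminus l then -1 else 0

/-- Orthogonal `ζ(λ)`: `1` on `PplusO`, `-1` on `PminusO`, `0` elsewhere. -/
def zSeqO (l : ℕ → ℕ) (j : ℕ) : ℤ :=
  if j ∈ PplusO l then 1 else if j ∈ PminusO l then -1 else 0

/-- `sp(λ) = λ + s(λ)` (termwise, truncated to ℕ). -/
def spPart (l : ℕ → ℕ) (j : ℕ) : ℕ := ((l j : ℤ) + sSeq l j).toNat

/-- Dominance order on partitions. -/
def Dom (l m : ℕ → ℕ) : Prop :=
  ∀ k, ∑ j ∈ Finset.range k, l (j + 1) ≤ ∑ j ∈ Finset.range k, m (j + 1)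

/-- `j_min(i)`: smallest index `j ≥ 1` with `l j = i`. -/
def jminPart (l : ℕ → ℕ) (i : ℕ) : ℕ := sInf {j | 1 ≤ j ∧ l j = i}

/-- `j_max(i)`: largest index `j ≥ 1` with `l j = i`. -/
def jmaxPart (l : ℕ → ℕ) (i : ℕ) : ℕ := sSup {j | 1 ≤ j ∧ l j = i}

/-- `iSeq 1 > iSeq 2 > ... > iSeq t` enumerates the even positive parts of odd
multiplicity of the symplectic partition `l`, completed by a final `0` if their
number is odd (so that `t` is even). -/
def MarkedSeq (l : ℕ → ℕ) (iSeq : ℕ → ℕ) (t : ℕ) : Prop :=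
  Even t ∧
  (∀ h h', 1 ≤ h → h < h' → h' ≤ t → iSeq h' < iSeq h) ∧
  (∀ h, 1 ≤ h → h ≤ t → Even (iSeq h)) ∧
  (∀ h, 1 ≤ h → h ≤ t → iSeq h ≠ 0 → Odd (mult l (iSeq h))) ∧
  (∀ i, 0 < i → Even i → Odd (mult l i) → ∃ h, 1 ≤ h ∧ h ≤ t ∧ iSeq h = i)

/-- Orthogonal analogue: `iSeq` enumerates the odd parts of odd multiplicity. -/
def MarkedSeqO (l : ℕ → ℕ) (iSeq : ℕ → ℕ) (t : ℕ) : Prop :=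
  Even t ∧
  (∀ h h', 1 ≤ h → h < h' → h' ≤ t → iSeq h' < iSeq h) ∧
  (∀ h, 1 ≤ h → h ≤ t → Odd (iSeq h)) ∧
  (∀ h, 1 ≤ h → h ≤ t → Odd (mult l (iSeq h))) ∧
  (∀ i, Odd i → Odd (mult l i) → ∃ h, 1 ≤ h ∧ h ≤ t ∧ iSeq h = i)

/-- `i` lies in the range `[i_{2h}, i_{2h-1}]` for some `h`. -/
def InRange (iSeq : ℕ → ℕ) (t : ℕ) (i : ℕ) : Prop :=
  ∃ h, 1 ≤ h ∧ 2 * h ≤ t ∧ iSeq (2 * h) ≤ i ∧ i ≤ iSeq (2 * h - 1)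

/-- Intervals of a (special symplectic) partition `l`, relative to the marked
sequence `iSeq` of length `t`. -/
def IsItv (l : ℕ → ℕ) (iSeq : ℕ → ℕ) (t : ℕ) (Δ : Set ℕ) : Prop :=
  (∃ h, 1 ≤ h ∧ 2 * h ≤ t ∧
      Δ = {i | (i = 0 ∨ 0 < mult l i) ∧ iSeq (2 * h) ≤ i ∧ i ≤ iSeq (2 * h - 1)}) ∨
  (∃ i, Even i ∧ (i = 0 ∨ 0 < mult l i) ∧ ¬ InRange iSeq t i ∧ Δ = {i})

/-- Intervals of a (special orthogonal, even) partition `l`. -/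
def IsItvO (l : ℕ → ℕ) (iSeq : ℕ → ℕ) (t : ℕ) (Δ : Set ℕ) : Prop :=
  (∃ h, 1 ≤ h ∧ 2 * h ≤ t ∧
      Δ = {i | 0 < mult l i ∧ iSeq (2 * h) ≤ i ∧ i ≤ iSeq (2 * h - 1)}) ∨
  (∃ i, Odd i ∧ 0 < mult l i ∧ ¬ InRange iSeq t i ∧ Δ = {i})

/-- `J(Δ)`: the set of indices `j ≥ 1` whose part lies in `Δ`. -/
def idxSet (l : ℕ → ℕ) (Δ : Set ℕ) : Set ℕ := {j | 1 ≤ j ∧ l j ∈ Δ}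

/-- Good parity at index `j`: `λ_{1,j}` even and `λ_{2,j}` odd. -/
def GoodIdx (l₁ l₂ : ℕ → ℕ) (j : ℕ) : Prop := Even (l₁ j) ∧ Odd (l₂ j)

/-- `J^+`: odd `j` of good parity with a strict decrease at `j-1 → j` for some `d`. -/
def Jplus (l₁ l₂ : ℕ → ℕ) : Set ℕ :=
  {j | Odd j ∧ GoodIdx l₁ l₂ j ∧ (j = 1 ∨ l₁ (j - 1) > l₁ j ∨ l₂ (j - 1) > l₂ j)}

/-- `J^-`: even `j` of good parity with a strict decrease at `j → j+1` for some `d`. -/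
def Jminus (l₁ l₂ : ℕ → ℕ) : Set ℕ :=
  {j | 2 ≤ j ∧ Even j ∧ GoodIdx l₁ l₂ j ∧ (l₁ j > l₁ (j + 1) ∨ l₂ j > l₂ (j + 1))}

/-- The sequence `ξ`: `1` on `J^+`, `-1` on `J^-`, `0` elsewhere. -/
def xiSeq (l₁ l₂ : ℕ → ℕ) (j : ℕ) : ℤ :=
  if j ∈ Jplus l₁ l₂ then 1 else if j ∈ Jminus l₁ l₂ then -1 else 0

/-- The endoscopic induction `λ = λ₁ + λ₂ + ξ` (termwise, truncated to ℕ). -/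
def indPart (l₁ l₂ : ℕ → ℕ) (j : ℕ) : ℕ := ((l₁ j : ℤ) + (l₂ j : ℤ) + xiSeq l₁ l₂ j).toNat

/-!
Scan the indices from left to right, grouped into blocks of equal parts. A block of odd parts
meets neither `P⁺` nor `P⁻`, and by the symplectic condition it has even length, so its first and
last indices have opposite parities. A block `[s, e]` of even parts contributes `s` to `P⁺`
when `s` is odd and `e` to `P⁻` when `e` is even. Hence the excess of `P⁺` over `P⁻` among the
indices `≤ k` is `k mod 2` at the end of every block, `1` strictly inside a block of even parts,
and `1` inside a block `[s, e]` of odd parts exactly when `s` is even (`pExcess`). Beyond the last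
nonzero part the excess is `1`, and an excess that always lies in `{0, 1}` forces the two
enumerations to interleave.
-/

namespace Nat

variable {p q : ℕ → Prop} [DecidablePred p] [DecidablePred q]

theorem card_toFinset_eq_count {n : ℕ} (hp : ∀ x, p x → x < n) (hf : (Set.ofPred p).Finite) :
    hf.toFinset.card = count p n := by
  rw [count_eq_card_filter_range]
  congr 1
  ext x
  simpa using fun hx => hp x hx

theorem image_nth_Iio_count {n : ℕ} (hp : ∀ x, p x → x < n) :
    nth p '' Set.Iio (count p n) = Set.ofPred p := by
  have hf : (Set.ofPred p).Finite := (Set.finite_Iio n).subset hp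
  rw [← card_toFinset_eq_count hp hf, image_nth_Iio_card]

theorem nth_lt_nth_add_of_count_le (hdisj : ∀ x, p x → ¬ q x) {d : ℕ}
    (hcount : ∀ n, count p n ≤ count q n + d) {i : ℕ}
    (hi : ∀ hf : (Set.ofPred p).Finite, i + d < hf.toFinset.card) :
    nth q i < nth p (i + d) := by
  have hpy : p (nth p (i + d)) := nth_mem _ hi
  have hqi : i < count q (nth p (i + d) + 1) := by
    have := hcount (nth p (i + d) + 1)
    rw [count_nth_succ hi] at this
    omega
  have hqx : q (nth q i) := nth_mem _ fun hf => hqi.trans_le (count_le_card hf _)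
  have hne : nth q i ≠ nth p (i + d) := fun h => hdisj _ hpy (h ▸ hqx)
  have := nth_lt_of_lt_count hqi
  omega

end Nat

def pExcess (l : ℕ → ℕ) (k : ℕ) : ℕ :=
  if k = 0 then 0
  else if Even (l k) then (if Odd k ∨ l (k + 1) = l k then 1 else 0)
  else if Even (jminPart l (l k)) then 1 else 0

section

variable {l : ℕ → ℕ}

theorem IsPartition.antitoneOn (hpart : IsPartition l) : AntitoneOn l (Set.Ici 1) :=
  antitoneOn_nat_Ici_of_succ_le hpart

theorem IsPartition.jminPart_eq_succ (hpart : IsPartition l) {k : ℕ}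
    (hend : k = 0 ∨ l (k + 1) ≠ l k) : jminPart l (l (k + 1)) = k + 1 := by
  refine le_antisymm (Nat.sInf_le ⟨by omega, rfl⟩) (le_csInf ⟨k + 1, by omega, rfl⟩ ?_)
  rintro i ⟨hi, hli⟩
  by_contra! hik
  have hki : l k ≤ l i := hpart.antitoneOn hi (Set.mem_Ici.2 (by omega)) (by omega)
  have := hpart k (by omega)
  omega

theorem IsPartition.setOf_eq_Icc_jminPart (hpart : IsPartition l) {k : ℕ} (hk : 1 ≤ k)
    (hend : l (k + 1) ≠ l k) : {i | 1 ≤ i ∧ l i = l k} = Set.Icc (jminPart l (l k)) k := by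
  obtain ⟨ha, hla⟩ : jminPart l (l k) ∈ {i | 1 ≤ i ∧ l i = l k} := Nat.sInf_mem ⟨k, hk, rfl⟩
  ext i
  constructor
  · rintro ⟨hi, hli⟩
    refine ⟨Nat.sInf_le ⟨hi, hli⟩, ?_⟩
    by_contra! hki
    have := hpart.antitoneOn (Set.mem_Ici.2 (by omega)) (Set.mem_Ici.2 hi)
      (show k + 1 ≤ i by omega)
    have := hpart k hk
    omega
  · rintro ⟨hai, hik⟩
    have := hpart.antitoneOn (Set.mem_Ici.2 ha) (Set.mem_Ici.2 (by omega)) hai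
    have := hpart.antitoneOn (Set.mem_Ici.2 (by omega)) (Set.mem_Ici.2 hk) hik
    exact ⟨by omega, by omega⟩

theorem IsPartition.mult_eq (hpart : IsPartition l) {k : ℕ} (hk : 1 ≤ k)
    (hend : l (k + 1) ≠ l k) : mult l (l k) = k + 1 - jminPart l (l k) := by
  rw [mult, hpart.setOf_eq_Icc_jminPart hk hend, Nat.card_coe_set_eq, ← Finset.coe_Icc,
    Set.ncard_coe_finset, Nat.card_Icc]

theorem IsSymplectic.even_jminPart_iff (hsymp : IsSymplectic l) (hpart : IsPartition l)
    {k : ℕ} (hk : 1 ≤ k) (hend : l (k + 1) ≠ l k) (hodd : Odd (l k)) :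
    Even (jminPart l (l k)) ↔ Odd k := by
  have hmult := hsymp _ hodd
  rw [hpart.mult_eq hk hend] at hmult
  have : jminPart l (l k) ≤ k := Nat.sInf_le ⟨hk, rfl⟩
  rw [Nat.even_iff] at hmult
  rw [Nat.even_iff, Nat.odd_iff]
  omega

theorem pExcess_le_one (l : ℕ → ℕ) (k : ℕ) : pExcess l k ≤ 1 := by
  unfold pExcess
  split_ifs <;> omega

theorem pExcess_eq_mod_two (hpart : IsPartition l) (hsymp : IsSymplectic l) {k : ℕ}
    (hend : k = 0 ∨ l (k + 1) ≠ l k) : pExcess l k = k % 2 := by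
  rcases Nat.eq_zero_or_pos k with rfl | hk1
  · simp [pExcess]
  have hjmin := hsymp.even_jminPart_iff hpart hk1 (by omega)
  simp only [pExcess, hk1.ne', if_false, Nat.even_iff, Nat.odd_iff] at hjmin ⊢
  split_ifs <;> omega

theorem pExcess_add_ite_mem_Pplus (hpart : IsPartition l) (hsymp : IsSymplectic l) (k : ℕ) :
    pExcess l k + (if k + 1 ∈ Pplus l then 1 else 0)
      = (if k + 1 ∈ Pminus l then 1 else 0) + pExcess l (k + 1) := by
  have hmono : l (k + 1 + 1) ≤ l (k + 1) := hpart (k + 1) (by omega)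
  have hprev : k = 0 ∨ l (k + 1) ≤ l k := by
    rcases Nat.eq_zero_or_pos k with h | h
    exacts [Or.inl h, Or.inr (hpart k h)]
  by_cases hnew : k = 0 ∨ l (k + 1) ≠ l k
  · rw [pExcess_eq_mod_two hpart hsymp hnew]
    simp only [Pplus, Pminus, pExcess, hpart.jminPart_eq_succ hnew, Set.mem_ofPred_eq,
      Nat.add_sub_cancel, Nat.odd_iff, Nat.even_iff, gt_iff_lt, add_eq_zero, one_ne_zero,
      and_false, if_false]
    split_ifs <;> omega
  · obtain ⟨hk, hsame⟩ : k ≠ 0 ∧ l (k + 1) = l k := by simpa [not_or] using hnew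
    simp only [Pplus, Pminus, pExcess, hsame, hk, or_true, Set.mem_ofPred_eq,
      Nat.add_sub_cancel, Nat.odd_iff, Nat.even_iff, gt_iff_lt, add_eq_zero, one_ne_zero,
      and_false, if_false]
    split_ifs <;> omega

theorem count_Pplus_eq_count_Pminus_add_pExcess (hpart : IsPartition l) (hsymp : IsSymplectic l)
    (k : ℕ) :
    Nat.count (· ∈ Pplus l) (k + 1) = Nat.count (· ∈ Pminus l) (k + 1) + pExcess l k := by
  induction k with
  | zero => simp [Nat.count_succ, Pplus, Pminus, pExcess]
  | succ k ih =>
    rw [Nat.count_succ, Nat.count_succ (· ∈ Pminus l), ih]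
    have := pExcess_add_ite_mem_Pplus hpart hsymp k
    omega

theorem notMem_Pminus_of_mem_Pplus {x : ℕ} (hx : x ∈ Pplus l) : x ∉ Pminus l :=
  fun h => Nat.not_even_iff_odd.2 hx.1 h.2.1

theorem lt_of_mem_Pplus {N : ℕ} (hN : ∀ j, N ≤ j → l j = 0) {x : ℕ} (hx : x ∈ Pplus l) :
    x < N + 2 := by
  obtain ⟨-, -, hx | hx⟩ := hx
  · omega
  · by_contra! hNx
    have := hN (x - 1) (by omega)
    omega

theorem lt_of_mem_Pminus {N : ℕ} (hN : ∀ j, N ≤ j → l j = 0) {x : ℕ} (hx : x ∈ Pminus l) :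
    x < N := by
  by_contra! hNx
  have := hN x hNx
  have := hx.2.2.2
  omega

theorem pExcess_eq_one_of_eventuallyZero {N : ℕ} (hN : ∀ j, N ≤ j → l j = 0) :
    pExcess l (N + 1) = 1 := by
  simp [pExcess, hN (N + 1) (by omega), hN (N + 1 + 1) (by omega)]

theorem count_Pminus_le_count_Pplus (hpart : IsPartition l) (hsymp : IsSymplectic l) (n : ℕ) :
    Nat.count (· ∈ Pminus l) n ≤ Nat.count (· ∈ Pplus l) n := by
  cases n with
  | zero => simp
  | succ k => simp [count_Pplus_eq_count_Pminus_add_pExcess hpart hsymp k]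

theorem count_Pplus_le_count_Pminus_add_one (hpart : IsPartition l) (hsymp : IsSymplectic l)
    (n : ℕ) : Nat.count (· ∈ Pplus l) n ≤ Nat.count (· ∈ Pminus l) n + 1 := by
  cases n with
  | zero => simp
  | succ k => simp [count_Pplus_eq_count_Pminus_add_pExcess hpart hsymp k, pExcess_le_one]

end

theorem Pplus_Pminus_interlace_general (l : ℕ → ℕ) (hpart : IsPartition l)
    (hzero : EventuallyZero l) (hsymp : IsSymplectic l) :
    ∃ (a : ℕ) (pp pm : ℕ → ℕ),
      Pplus l = pp '' Set.Iio (a + 1) ∧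
      Pminus l = pm '' Set.Iio a ∧
      ∀ i, i < a → pp i < pm i ∧ pm i < pp (i + 1) := by
  obtain ⟨N, hN⟩ := hzero
  have hplus : ∀ x ∈ Pplus l, x < N + 1 + 1 := fun _ => lt_of_mem_Pplus hN
  have hminus : ∀ x ∈ Pminus l, x < N + 1 + 1 := fun x hx =>
    (lt_of_mem_Pminus hN hx).trans (by omega)
  have hcount := count_Pplus_eq_count_Pminus_add_pExcess hpart hsymp (N + 1)
  rw [pExcess_eq_one_of_eventuallyZero hN] at hcount
  refine ⟨Nat.count (· ∈ Pminus l) (N + 1 + 1), Nat.nth (· ∈ Pplus l), Nat.nth (· ∈ Pminus l),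
    ?_, ?_, fun i hi => ⟨?_, ?_⟩⟩
  · rw [← hcount]
    exact (Nat.image_nth_Iio_count hplus).symm
  · exact (Nat.image_nth_Iio_count hminus).symm
  · refine Nat.nth_lt_nth_add_of_count_le (d := 0)
      (fun x hx h => notMem_Pminus_of_mem_Pplus h hx) (count_Pminus_le_count_Pplus hpart hsymp)
      fun hf => ?_
    rw [Nat.card_toFinset_eq_count hminus]
    omega
  · refine Nat.nth_lt_nth_add_of_count_le (fun x hx => notMem_Pminus_of_mem_Pplus hx)
      (count_Pplus_le_count_Pminus_add_one hpart hsymp) fun hf => ?_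
    rw [Nat.card_toFinset_eq_count hplus, hcount]
    omega

/-- `|P^+(λ)| = |P^-(λ)| + 1` and the elements interleave
`p⁺_1 < p⁻_1 < p⁺_2 < ... < p⁻_a < p⁺_{a+1}`. -/
theorem Pplus_Pminus_interlace (m : ℕ) (l : ℕ → ℕ) (hpart : IsPartition l)
    (hzero : EventuallyZero l) (hsum : psum l = 2 * m) (hsymp : IsSymplectic l) :
    ∃ (a : ℕ) (pp pm : ℕ → ℕ),
      Pplus l = pp '' Set.Iio (a + 1) ∧
      Pminus l = pm '' Set.Iio a ∧
      ∀ i, i < a → pp i < pm i ∧ pm i < pp (i + 1) :=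
  Pplus_Pminus_interlace_general l hpart hzero hsymp
end
end

section
/- Let λ be a symplectic partition of 2m. Define Q^+(λ) as the set of even indices j ≥ 2 such that λ_j is odd and λ_{j-1} > λ_j, and Q^-(λ) as the set of odd indices j ≥ 1 such that λ_j is odd and λ_j > λ_{j+1}. Then |Q^+(λ)| = |Q^-(λ)|, and writing Q^+(λ) = {q⁺_1 < ... < q⁺_b}, Q^-(λ) = {q⁻_1 < ... < q⁻_b}, the elements interleave: q⁺_1 < q⁻_1 < q⁺_2 < q⁻_2 < ... < q⁺_b < q⁻_b. -/
open Classical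

noncomputable section

/-!
Every odd part of a symplectic partition fills a block of consecutive indices `[a, b]` whose
length, the multiplicity of the part, is even; so `a` and `b` have opposite parities and `a < b`.
`Q⁺(λ)` is exactly the set of even block starts `a ≥ 2` of odd parts and `Q⁻(λ)` the set of odd
block ends, so `a ↦ b` maps `Q⁺(λ)` onto `Q⁻(λ)`. The blocks are disjoint and ordered by index, so
the starts and ends alternate.
-/

section

variable {l : ℕ → ℕ}

theorem IsPartition.antitone (hl : IsPartition l) {a b : ℕ} (ha : 1 ≤ a) (hab : a ≤ b) :
    l b ≤ l a := by
  induction b, hab using Nat.le_induction with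
  | base => exact le_rfl
  | succ n hn ih => exact (hl n (ha.trans hn)).trans ih

theorem EventuallyZero.bddAbove_setOf_eq (hzero : EventuallyZero l) {v : ℕ} (hv : v ≠ 0) :
    BddAbove {k | 1 ≤ k ∧ l k = v} := by
  obtain ⟨N, hN⟩ := hzero
  refine ⟨N, fun k ⟨_, hk⟩ => ?_⟩
  by_contra! hNk
  exact hv (hk ▸ hN k hNk.le)

theorem jminPart_mem {j : ℕ} (hj : 1 ≤ j) :
    1 ≤ jminPart l (l j) ∧ l (jminPart l (l j)) = l j :=
  Nat.sInf_mem (s := {k | 1 ≤ k ∧ l k = l j}) ⟨j, hj, rfl⟩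

theorem jminPart_le {k v : ℕ} (hk : 1 ≤ k) (hkv : l k = v) : jminPart l v ≤ k :=
  Nat.sInf_le ⟨hk, hkv⟩

theorem EventuallyZero.jmaxPart_mem (hzero : EventuallyZero l) {j : ℕ} (hj : 1 ≤ j)
    (hv : l j ≠ 0) : 1 ≤ jmaxPart l (l j) ∧ l (jmaxPart l (l j)) = l j :=
  Nat.sSup_mem (s := {k | 1 ≤ k ∧ l k = l j}) ⟨j, hj, rfl⟩ (hzero.bddAbove_setOf_eq hv)

theorem EventuallyZero.le_jmaxPart (hzero : EventuallyZero l) {k v : ℕ} (hv : v ≠ 0)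
    (hk : 1 ≤ k) (hkv : l k = v) : k ≤ jmaxPart l v :=
  le_csSup (hzero.bddAbove_setOf_eq hv) ⟨hk, hkv⟩

theorem IsPartition.setOf_eq_Icc (hl : IsPartition l) (hzero : EventuallyZero l) {j : ℕ}
    (hj : 1 ≤ j) (hv : l j ≠ 0) :
    {k | 1 ≤ k ∧ l k = l j} = Set.Icc (jminPart l (l j)) (jmaxPart l (l j)) := by
  obtain ⟨hmin1, hmin⟩ := jminPart_mem (l := l) hj
  obtain ⟨-, hmax⟩ := hzero.jmaxPart_mem hj hv
  ext k
  refine ⟨fun ⟨hk, hkv⟩ => ⟨jminPart_le hk hkv, hzero.le_jmaxPart hv hk hkv⟩, ?_⟩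
  rintro ⟨hmin_le, hle_max⟩
  have hk : 1 ≤ k := hmin1.trans hmin_le
  exact ⟨hk, le_antisymm (hmin ▸ hl.antitone hmin1 hmin_le) (hmax ▸ hl.antitone hk hle_max)⟩

theorem IsPartition.mult_eq_s3 (hl : IsPartition l) (hzero : EventuallyZero l) {j : ℕ}
    (hj : 1 ≤ j) (hv : l j ≠ 0) :
    mult l (l j) = jmaxPart l (l j) + 1 - jminPart l (l j) := by
  rw [mult, hl.setOf_eq_Icc hzero hj hv, ← Finset.coe_Icc, Nat.card_coe_set_eq,
    Set.ncard_coe_finset, Nat.card_Icc]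

theorem IsSymplectic.even_jminPart_iff_s3 (hsymp : IsSymplectic l) (hl : IsPartition l)
    (hzero : EventuallyZero l) {j : ℕ} (hj : 1 ≤ j) (hodd : Odd (l j)) :
    Even (jminPart l (l j)) ↔ Odd (jmaxPart l (l j)) := by
  have heven := hsymp (l j) hodd
  rw [hl.mult_eq_s3 hzero hj hodd.pos.ne'] at heven
  have hle := jminPart_le (l := l) hj rfl
  have hge := hzero.le_jmaxPart hodd.pos.ne' hj rfl
  rw [Nat.even_iff] at heven ⊢
  rw [Nat.odd_iff]
  omega

theorem IsPartition.mem_Qplus_iff (hl : IsPartition l) {j : ℕ} :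
    j ∈ Qplus l ↔ 2 ≤ j ∧ Even j ∧ Odd (l j) ∧ jminPart l (l j) = j := by
  constructor
  · rintro ⟨hj2, hje, hodd, hdrop⟩
    refine ⟨hj2, hje, hodd, le_antisymm (jminPart_le (by omega) rfl) ?_⟩
    by_contra! hlt
    obtain ⟨hmin1, hmin⟩ := jminPart_mem (l := l) (j := j) (by omega)
    have := hl.antitone hmin1 (show jminPart l (l j) ≤ j - 1 by omega)
    omega
  · rintro ⟨hj2, hje, hodd, hmin⟩
    refine ⟨hj2, hje, hodd, lt_of_le_of_ne (hl.antitone (by omega) (by omega)) fun heq => ?_⟩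
    have := jminPart_le (l := l) (k := j - 1) (by omega) heq.symm
    omega

theorem IsPartition.mem_Qminus_iff (hl : IsPartition l) (hzero : EventuallyZero l) {j : ℕ} :
    j ∈ Qminus l ↔ Odd j ∧ Odd (l j) ∧ jmaxPart l (l j) = j := by
  constructor
  · rintro ⟨hjo, hodd, hdrop⟩
    refine ⟨hjo, hodd, le_antisymm ?_ (hzero.le_jmaxPart hodd.pos.ne' hjo.pos rfl)⟩
    by_contra! hlt
    obtain ⟨-, hmax⟩ := hzero.jmaxPart_mem hjo.pos hodd.pos.ne'
    have := hl.antitone (by omega) (show j + 1 ≤ jmaxPart l (l j) by omega)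
    omega
  · rintro ⟨hjo, hodd, hmax⟩
    refine ⟨hjo, hodd, lt_of_le_of_ne (hl j hjo.pos) fun heq => ?_⟩
    have := hzero.le_jmaxPart hodd.pos.ne' (k := j + 1) (by omega) heq
    omega

theorem odd_jmaxPart_of_mem_Qplus (hl : IsPartition l) (hzero : EventuallyZero l)
    (hsymp : IsSymplectic l) {j : ℕ} (hj : j ∈ Qplus l) : Odd (jmaxPart l (l j)) := by
  obtain ⟨hj2, hje, hodd, hmin⟩ := hl.mem_Qplus_iff.mp hj
  exact (hsymp.even_jminPart_iff_s3 hl hzero (by omega) hodd).mp (by rwa [hmin])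

theorem jmaxPart_mem_Qminus (hl : IsPartition l) (hzero : EventuallyZero l)
    (hsymp : IsSymplectic l) {j : ℕ} (hj : j ∈ Qplus l) : jmaxPart l (l j) ∈ Qminus l := by
  have hmax_odd := odd_jmaxPart_of_mem_Qplus hl hzero hsymp hj
  obtain ⟨hj2, -, hodd, -⟩ := hj
  obtain ⟨-, hmax⟩ := hzero.jmaxPart_mem (j := j) (by omega) hodd.pos.ne'
  exact (hl.mem_Qminus_iff hzero).mpr ⟨hmax_odd, by rwa [hmax], by rw [hmax]⟩

theorem lt_jmaxPart_of_mem_Qplus (hl : IsPartition l) (hzero : EventuallyZero l)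
    (hsymp : IsSymplectic l) {j : ℕ} (hj : j ∈ Qplus l) : j < jmaxPart l (l j) := by
  have hmax_odd := odd_jmaxPart_of_mem_Qplus hl hzero hsymp hj
  obtain ⟨hj2, hje, hodd, -⟩ := hj
  refine lt_of_le_of_ne (hzero.le_jmaxPart hodd.pos.ne' (by omega) rfl) fun heq => ?_
  rw [← heq] at hmax_odd
  exact Nat.not_even_iff_odd.mpr hmax_odd hje

theorem image_jmaxPart_Qplus (hl : IsPartition l) (hzero : EventuallyZero l)
    (hsymp : IsSymplectic l) : (fun j => jmaxPart l (l j)) '' Qplus l = Qminus l := by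
  refine Set.Subset.antisymm ?_ fun k hk => ?_
  · rintro _ ⟨j, hj, rfl⟩
    exact jmaxPart_mem_Qminus hl hzero hsymp hj
  obtain ⟨hko, hodd, hmax⟩ := (hl.mem_Qminus_iff hzero).mp hk
  obtain ⟨hmin1, hmin⟩ := jminPart_mem (l := l) hko.pos
  have hmin_even : Even (jminPart l (l k)) :=
    (hsymp.even_jminPart_iff_s3 hl hzero hko.pos hodd).mpr (by rwa [hmax])
  have hmin2 : 2 ≤ jminPart l (l k) := by
    obtain ⟨r, hr⟩ := hmin_even
    omega
  refine ⟨jminPart l (l k), hl.mem_Qplus_iff.mpr ⟨hmin2, hmin_even, by rwa [hmin], ?_⟩, ?_⟩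
  · rw [hmin]
  · simp only [hmin, hmax]

theorem jmaxPart_lt_of_mem_Qplus (hl : IsPartition l) (hzero : EventuallyZero l)
    {j j' : ℕ} (hj : j ∈ Qplus l) (hj' : j' ∈ Qplus l) (hlt : j < j') :
    jmaxPart l (l j) < j' := by
  obtain ⟨hj2, -, hodd, -⟩ := hj
  obtain ⟨-, -, -, hdrop'⟩ := hj'
  have hval : l j' < l j := lt_of_lt_of_le hdrop' (hl.antitone (by omega) (by omega))
  obtain ⟨-, hmax⟩ := hzero.jmaxPart_mem (j := j) (by omega) hodd.pos.ne'
  by_contra! hle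
  have := hl.antitone (by omega) hle
  omega

theorem EventuallyZero.Qplus_finite (hzero : EventuallyZero l) :
    (Qplus l).Finite := by
  obtain ⟨N, hN⟩ := hzero
  refine (Set.finite_Iio N).subset fun j ⟨_, _, hodd, _⟩ => Set.mem_Iio.mpr ?_
  by_contra! hNj
  rw [hN j hNj] at hodd
  exact Nat.not_odd_zero hodd

end

theorem Qplus_Qminus_interlace_general (l : ℕ → ℕ) (hpart : IsPartition l)
    (hzero : EventuallyZero l) (hsymp : IsSymplectic l) :
    ∃ (b : ℕ) (qp qm : ℕ → ℕ),
      Qplus l = qp '' Set.Iio b ∧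
      Qminus l = qm '' Set.Iio b ∧
      (∀ i, i < b → qp i < qm i) ∧
      (∀ i, i + 1 < b → qm i < qp (i + 1)) := by
  have hfin := hzero.Qplus_finite
  have hqp_mem : ∀ i, i < hfin.toFinset.card → Nat.nth (· ∈ Qplus l) i ∈ Qplus l :=
    fun i hi => Nat.nth_mem_of_lt_card hfin hi
  refine ⟨hfin.toFinset.card, Nat.nth (· ∈ Qplus l),
    fun i => jmaxPart l (l (Nat.nth (· ∈ Qplus l) i)), (Nat.image_nth_Iio_card hfin).symm,
    ?_, fun i hi => ?_, fun i hi => ?_⟩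
  · calc Qminus l = (fun j => jmaxPart l (l j)) '' Qplus l :=
          (image_jmaxPart_Qplus hpart hzero hsymp).symm
      _ = (fun j => jmaxPart l (l j)) '' (Nat.nth (· ∈ Qplus l) '' Set.Iio hfin.toFinset.card) :=
          congrArg _ (Nat.image_nth_Iio_card hfin).symm
      _ = _ := Set.image_image _ _ _
  · exact lt_jmaxPart_of_mem_Qplus hpart hzero hsymp (hqp_mem i hi)
  · exact jmaxPart_lt_of_mem_Qplus hpart hzero (hqp_mem i (by omega)) (hqp_mem _ hi)
      (Nat.nth_lt_nth_of_lt_card hfin i.lt_succ_self hi)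

/-- `|Q^+(λ)| = |Q^-(λ)|` and the elements interleave
`q⁺_1 < q⁻_1 < q⁺_2 < ... < q⁺_b < q⁻_b`. -/
theorem Qplus_Qminus_interlace (m : ℕ) (l : ℕ → ℕ) (hpart : IsPartition l)
    (hzero : EventuallyZero l) (hsum : psum l = 2 * m) (hsymp : IsSymplectic l) :
    ∃ (b : ℕ) (qp qm : ℕ → ℕ),
      Qplus l = qp '' Set.Iio b ∧
      Qminus l = qm '' Set.Iio b ∧
      (∀ i, i < b → qp i < qm i) ∧
      (∀ i, i + 1 < b → qm i < qp (i + 1)) :=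
  Qplus_Qminus_interlace_general l hpart hzero hsymp
end
end

section
/- Let λ be a symplectic partition of 2n. Define the sequence s(λ) by s(λ)_j = 1 if j ∈ Q^+(λ), s(λ)_j = -1 if j ∈ Q^-(λ), and s(λ)_j = 0 otherwise. Then the sequence ν = λ + s(λ) (termwise sum) is a partition, i.e. ν_j ≥ ν_{j+1} ≥ 0 for all j ≥ 1. -/
open Classical

noncomputable section

/-! `s(λ)` moves an odd part by one: down at an odd index `j` only where `λ_j > λ_{j+1}`, up at
an even index `j` only where `λ_{j-1} > λ_j`, so no single shift can break monotonicity. The one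
collision, `-1` at `j` and `+1` at `j + 1`, happens between two odd parts with `λ_j > λ_{j+1}`,
which therefore differ by at least `2`. -/

lemma sSeq_cases (l : ℕ → ℕ) (j : ℕ) :
    sSeq l j = 1 ∧ j ∈ Qplus l ∨ sSeq l j = -1 ∧ j ∈ Qminus l ∨ sSeq l j = 0 := by
  unfold sSeq
  split_ifs <;> simp_all

lemma lt_of_succ_mem_Qplus {l : ℕ → ℕ} {j : ℕ} (h : j + 1 ∈ Qplus l) : l (j + 1) < l j := by
  simpa using h.2.2.2

lemma succ_lt_of_mem_Qminus {l : ℕ → ℕ} {j : ℕ} (h : j ∈ Qminus l) : l (j + 1) < l j :=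
  h.2.2

lemma add_two_le_of_mem_Qminus_of_succ_mem_Qplus {l : ℕ → ℕ} {j : ℕ} (hj : j ∈ Qminus l)
    (hj' : j + 1 ∈ Qplus l) : l (j + 1) + 2 ≤ l j := by
  obtain ⟨a, ha⟩ := hj.2.1
  obtain ⟨b, hb⟩ := hj'.2.2.1
  have := succ_lt_of_mem_Qminus hj
  omega

lemma add_sSeq_nonneg (l : ℕ → ℕ) (j : ℕ) : 0 ≤ (l j : ℤ) + sSeq l j := by
  rcases sSeq_cases l j with ⟨hs, -⟩ | ⟨hs, hj⟩ | hs
  · omega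
  · have := succ_lt_of_mem_Qminus hj
    omega
  · omega

lemma add_sSeq_succ_le {l : ℕ → ℕ} {j : ℕ} (h : l (j + 1) ≤ l j) :
    (l (j + 1) : ℤ) + sSeq l (j + 1) ≤ (l j : ℤ) + sSeq l j := by
  rcases sSeq_cases l j with ⟨hs, -⟩ | ⟨hs, hj⟩ | hs <;>
    rcases sSeq_cases l (j + 1) with ⟨hs', hj'⟩ | ⟨hs', -⟩ | hs' <;>
    rw [hs, hs']
  case inr.inl.inl =>
    have := add_two_le_of_mem_Qminus_of_succ_mem_Qplus hj hj'
    omega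
  case inr.inl.inr.inr =>
    have := succ_lt_of_mem_Qminus hj
    omega
  case inr.inr.inl =>
    have := lt_of_succ_mem_Qplus hj'
    omega
  all_goals omega

theorem lambda_add_s_isPartition_general (l : ℕ → ℕ) (hpart : IsPartition l) :
    ∀ j, 1 ≤ j →
      0 ≤ (l j : ℤ) + sSeq l j ∧
      (l (j + 1) : ℤ) + sSeq l (j + 1) ≤ (l j : ℤ) + sSeq l j :=
  fun j hj => ⟨add_sSeq_nonneg l j, add_sSeq_succ_le (hpart j hj)⟩

/-- `ν = λ + s(λ)` is a partition: its terms are nonnegative and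
weakly decreasing. -/
theorem lambda_add_s_isPartition (n : ℕ) (l : ℕ → ℕ) (hpart : IsPartition l)
    (hzero : EventuallyZero l) (hsum : psum l = 2 * n) (hsymp : IsSymplectic l) :
    ∀ j, 1 ≤ j →
      0 ≤ (l j : ℤ) + sSeq l j ∧
      (l (j + 1) : ℤ) + sSeq l (j + 1) ≤ (l j : ℤ) + sSeq l j :=
  lambda_add_s_isPartition_general l hpart
end
end

section
/- Let λ be a symplectic partition of 2n and ν = λ + s(λ) = sp(λ). Then P^+(ν) = P^+(λ) ∪ Q^-(λ) and P^-(ν) = P^-(λ) ∪ Q^+(λ); equivalently, ζ(λ) = ζ(ν) + s(λ) as sequences. -/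
open Classical

noncomputable section

/-!
The map `sp` only touches odd parts sitting at the edge of a block of equal parts, moving them
by one to an even value: up at the (even) indices of `Q⁺(λ)`, down at the (odd) indices of
`Q⁻(λ)`. Such a move makes the part even while keeping the strict descent that `P^±` asks for,
and it never creates or destroys a descent next to an even part. So `P^±(ν)` is `P^±(λ)`
together with the indices of `Q^∓(λ)`; as `P⁺, P⁻, Q⁺, Q⁻` are pairwise disjoint (by the
parities of `j` and `λ_j`), the identity for `ζ` follows.
-/

section Indicators

variable (l : ℕ → ℕ)

theorem disjoint_Pplus_Pminus : Disjoint (Pplus l) (Pminus l) :=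
  Set.disjoint_left.2 fun _ hp hm => Nat.not_odd_iff_even.2 hm.2.1 hp.1

theorem disjoint_Qplus_Qminus : Disjoint (Qplus l) (Qminus l) :=
  Set.disjoint_left.2 fun _ hp hm => Nat.not_odd_iff_even.2 hp.2.1 hm.1

theorem disjoint_Pplus_Qminus : Disjoint (Pplus l) (Qminus l) :=
  Set.disjoint_left.2 fun _ hp hq => Nat.not_odd_iff_even.2 hp.2.1 hq.2.1

theorem disjoint_Pminus_Qplus : Disjoint (Pminus l) (Qplus l) :=
  Set.disjoint_left.2 fun _ hp hq => Nat.not_odd_iff_even.2 hp.2.2.1 hq.2.2.1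

theorem zSeq_eq_indicator_sub (j : ℕ) :
    zSeq l j = (Pplus l).indicator 1 j - (Pminus l).indicator 1 j := by
  by_cases hp : j ∈ Pplus l
  · have hm : j ∉ Pminus l := Set.disjoint_left.1 (disjoint_Pplus_Pminus l) hp
    simp [zSeq, hp, hm]
  · by_cases hm : j ∈ Pminus l <;> simp [zSeq, hp, hm]

theorem sSeq_eq_indicator_sub (j : ℕ) :
    sSeq l j = (Qplus l).indicator 1 j - (Qminus l).indicator 1 j := by
  by_cases hp : j ∈ Qplus l
  · have hm : j ∉ Qminus l := Set.disjoint_left.1 (disjoint_Qplus_Qminus l) hp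
    simp [sSeq, hp, hm]
  · by_cases hm : j ∈ Qminus l <;> simp [sSeq, hp, hm]

theorem zSeq_eq_zSeq_add_sSeq_of_eq_union {l ν : ℕ → ℕ}
    (hplus : Pplus ν = Pplus l ∪ Qminus l) (hminus : Pminus ν = Pminus l ∪ Qplus l) (j : ℕ) :
    zSeq l j = zSeq ν j + sSeq l j := by
  rw [zSeq_eq_indicator_sub, zSeq_eq_indicator_sub, sSeq_eq_indicator_sub, hplus, hminus,
    Set.indicator_union_of_disjoint (disjoint_Pplus_Qminus l),
    Set.indicator_union_of_disjoint (disjoint_Pminus_Qplus l)]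
  ring

end Indicators

section SpPart

variable {l : ℕ → ℕ} {j : ℕ}

theorem IsPartition.apply_le_apply_sub_one (hl : IsPartition l) (hj : 2 ≤ j) :
    l j ≤ l (j - 1) := by
  simpa [Nat.sub_add_cancel (by omega : 1 ≤ j)] using hl (j - 1) (by omega)

variable (l j) in
theorem spPart_cases :
    (j ∈ Qplus l ∧ spPart l j = l j + 1) ∨ (j ∈ Qminus l ∧ spPart l j = l j - 1) ∨
      (j ∉ Qplus l ∧ j ∉ Qminus l ∧ spPart l j = l j) := by
  by_cases hp : j ∈ Qplus l
  · left
    refine ⟨hp, ?_⟩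
    simp only [spPart, sSeq, if_pos hp]
    omega
  · by_cases hm : j ∈ Qminus l
    · right; left
      have hpos : 1 ≤ l j := hm.2.1.pos
      refine ⟨hm, ?_⟩
      simp only [spPart, sSeq, if_neg hp, if_pos hm]
      omega
    · right; right
      refine ⟨hp, hm, ?_⟩
      simp [spPart, sSeq, hp, hm]

theorem mem_Pplus_spPart_iff (hl : IsPartition l) :
    j ∈ Pplus (spPart l) ↔ j ∈ Pplus l ∨ j ∈ Qminus l := by
  have hj := spPart_cases l j
  have hprev := spPart_cases l (j - 1)
  have hmono : 2 ≤ j → l j ≤ l (j - 1) := hl.apply_le_apply_sub_one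
  simp only [Pplus, Qplus, Qminus, Set.mem_ofPred_eq, Nat.even_iff, Nat.odd_iff] at hj hprev ⊢
  omega

theorem mem_Pminus_spPart_iff (hl : IsPartition l) :
    j ∈ Pminus (spPart l) ↔ j ∈ Pminus l ∨ j ∈ Qplus l := by
  have hj := spPart_cases l j
  have hnext := spPart_cases l (j + 1)
  have hmono : 1 ≤ j → l (j + 1) ≤ l j := hl j
  simp only [Pminus, Qplus, Qminus, Set.mem_ofPred_eq, Nat.even_iff, Nat.odd_iff,
    Nat.add_sub_cancel] at hj hnext ⊢
  omega

end SpPart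

theorem zeta_sp_relation_general (l : ℕ → ℕ) (hpart : IsPartition l) :
    Pplus (spPart l) = Pplus l ∪ Qminus l ∧
    Pminus (spPart l) = Pminus l ∪ Qplus l ∧
    ∀ j, zSeq l j = zSeq (spPart l) j + sSeq l j := by
  have hplus : Pplus (spPart l) = Pplus l ∪ Qminus l :=
    Set.ext fun _ => mem_Pplus_spPart_iff hpart
  have hminus : Pminus (spPart l) = Pminus l ∪ Qplus l :=
    Set.ext fun _ => mem_Pminus_spPart_iff hpart
  exact ⟨hplus, hminus, zSeq_eq_zSeq_add_sSeq_of_eq_union hplus hminus⟩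

/-- with `ν = λ + s(λ) = sp(λ)`, one has `P^+(ν) = P^+(λ) ∪ Q^-(λ)`
and `P^-(ν) = P^-(λ) ∪ Q^+(λ)`; equivalently `ζ(λ) = ζ(ν) + s(λ)`. -/
theorem zeta_sp_relation (n : ℕ) (l : ℕ → ℕ) (hpart : IsPartition l)
    (hzero : EventuallyZero l) (hsum : psum l = 2 * n) (hsymp : IsSymplectic l) :
    Pplus (spPart l) = Pplus l ∪ Qminus l ∧
    Pminus (spPart l) = Pminus l ∪ Qplus l ∧
    ∀ j, zSeq l j = zSeq (spPart l) j + sSeq l j :=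
  zeta_sp_relation_general l hpart
end
end

section
/- Let λ be a symplectic partition of 2m, and let i_1 > i_2 > ... > i_t be the even positive integers i such that the multiplicity of i in λ is odd (if their number is odd, append i_t = 0 to make t even). For h = 1, ..., t, one has j_min(i_h) ≡ h mod 2, and if i_h ≠ 0 then j_max(i_h) ≡ h mod 2, where j_min(i) and j_max(i) denote the smallest and largest index j with λ_j = i (with j_min(0) = length(λ)+1). -/
open Classical

noncomputable section

/-!
The indices before `j_min(i)` are exactly those whose part exceeds `i`, so `j_min(i) - 1` is the
sum of the multiplicities of the parts above `i`, which is congruent mod 2 to the number of parts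
above `i` of odd multiplicity. In a symplectic partition these are the even parts
`i_1 > ⋯ > i_{h-1}` above `i_h`, hence `j_min(i_h) ≡ h`. Since the indices with part `i` form
the interval `[j_min(i), j_max(i)]`, whose length is the odd multiplicity of `i_h ≠ 0`, also
`j_max(i_h) ≡ j_min(i_h)`.
-/

open Finset

variable {l : ℕ → ℕ} {i : ℕ}

theorem nonempty_setOf_eq_of_mult_ne_zero (hi : mult l i ≠ 0) : {j | 1 ≤ j ∧ l j = i}.Nonempty :=
  Set.nonempty_coe_sort.mp (Nat.card_ne_zero.mp hi).1

theorem EventuallyZero.nonempty_setOf_eq_zero (hz : EventuallyZero l) :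
    {j | 1 ≤ j ∧ l j = 0}.Nonempty := by
  obtain ⟨N, hN⟩ := hz
  exact ⟨N + 1, by omega, hN _ (by omega)⟩

theorem EventuallyZero.bddAbove_setOf_eq_s9 (hz : EventuallyZero l) (hi : i ≠ 0) :
    BddAbove {j | 1 ≤ j ∧ l j = i} := by
  obtain ⟨N, hN⟩ := hz
  refine ⟨N, fun j ⟨_, hj⟩ => ?_⟩
  by_contra hNj
  exact hi (hj ▸ hN j (by omega))

namespace IsPartition

theorem antitoneOn_s9 (hl : IsPartition l) : AntitoneOn l (Set.Ici 1) :=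
  antitoneOn_of_add_one_le Set.ordConnected_Ici fun j _ hj _ => hl j hj

theorem lt_iff_mem_Ico_jminPart (hl : IsPartition l) (hi : {j | 1 ≤ j ∧ l j = i}.Nonempty)
    (j : ℕ) :
    1 ≤ j ∧ i < l j ↔ j ∈ Ico 1 (jminPart l i) := by
  obtain ⟨ha1, hai⟩ : 1 ≤ jminPart l i ∧ l (jminPart l i) = i := Nat.sInf_mem hi
  rw [mem_Ico]
  constructor
  · rintro ⟨hj1, hij⟩
    refine ⟨hj1, lt_of_not_ge fun hle => ?_⟩
    have := hl.antitoneOn_s9 (Set.mem_Ici.mpr ha1) (Set.mem_Ici.mpr hj1) hle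
    omega
  · rintro ⟨hj1, hja⟩
    refine ⟨hj1, lt_of_le_of_ne ?_ fun hij => Nat.notMem_of_lt_sInf hja ⟨hj1, hij.symm⟩⟩
    exact hai ▸ hl.antitoneOn_s9 (Set.mem_Ici.mpr hj1) (Set.mem_Ici.mpr ha1) hja.le

theorem even_jminPart_sub_one_iff (hl : IsPartition l) (hi : {j | 1 ≤ j ∧ l j = i}.Nonempty)
    {V : Finset ℕ} (hV : ∀ v, v ∈ V ↔ i < v ∧ Odd (mult l v)) :
    Even (jminPart l i - 1) ↔ Even #V := by
  set s := Ico 1 (jminPart l i)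
  have hmult : ∀ v, i < v → mult l v = #{j ∈ s | l j = v} := by
    intro v hv
    have hset : {j | 1 ≤ j ∧ l j = v} = ↑({j ∈ s | l j = v} : Finset ℕ) := by
      ext j
      rw [coe_filter]
      show 1 ≤ j ∧ l j = v ↔ j ∈ s ∧ l j = v
      rw [← hl.lt_iff_mem_Ico_jminPart hi]
      exact ⟨fun ⟨hj1, hjv⟩ => ⟨⟨hj1, hjv ▸ hv⟩, hjv⟩, fun ⟨⟨hj1, _⟩, hjv⟩ => ⟨hj1, hjv⟩⟩
    rw [mult, hset, Nat.card_coe_set_eq, Set.ncard_coe_finset]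
  have hodd : {v ∈ s.image l | Odd (mult l v)} = V := by
    ext v
    rw [mem_filter, mem_image, hV]
    constructor
    · rintro ⟨⟨j, hj, rfl⟩, hodd⟩
      exact ⟨((hl.lt_iff_mem_Ico_jminPart hi j).mpr hj).2, hodd⟩
    · rintro ⟨hiv, hodd⟩
      obtain ⟨j, hj1, rfl⟩ := nonempty_setOf_eq_of_mult_ne_zero (l := l) hodd.pos.ne'
      exact ⟨⟨j, (hl.lt_iff_mem_Ico_jminPart hi j).mp ⟨hj1, hiv⟩, rfl⟩, hodd⟩
  have hcard : jminPart l i - 1 = ∑ v ∈ s.image l, mult l v := by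
    rw [← Nat.card_Ico, card_eq_sum_card_image l s]
    refine sum_congr rfl fun v hv => (hmult v ?_).symm
    obtain ⟨j, hj, rfl⟩ := mem_image.mp hv
    exact ((hl.lt_iff_mem_Ico_jminPart hi j).mpr hj).2
  rw [hcard, even_sum_iff_even_card_odd, hodd]

theorem mult_add_jminPart (hl : IsPartition l) (hi : {j | 1 ≤ j ∧ l j = i}.Nonempty)
    (hbdd : BddAbove {j | 1 ≤ j ∧ l j = i}) :
    mult l i + jminPart l i = jmaxPart l i + 1 := by
  obtain ⟨ha1, hai⟩ : 1 ≤ jminPart l i ∧ l (jminPart l i) = i := Nat.sInf_mem hi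
  obtain ⟨hb1, hbi⟩ : 1 ≤ jmaxPart l i ∧ l (jmaxPart l i) = i := Nat.sSup_mem hi hbdd
  have hIcc : {j | 1 ≤ j ∧ l j = i} = Set.Icc (jminPart l i) (jmaxPart l i) := by
    ext j
    constructor
    · intro hj
      exact ⟨Nat.sInf_le hj, le_csSup hbdd hj⟩
    · rintro ⟨haj, hjb⟩
      have := hl.antitoneOn_s9 (Set.mem_Ici.mpr ha1) (Set.mem_Ici.mpr (ha1.trans haj)) haj
      have := hl.antitoneOn_s9 (Set.mem_Ici.mpr (ha1.trans haj)) (Set.mem_Ici.mpr hb1) hjb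
      exact ⟨ha1.trans haj, by omega⟩
  have hab : jminPart l i ≤ jmaxPart l i := le_csSup hbdd (Nat.sInf_mem hi)
  rw [mult, hIcc, ← coe_Icc, Nat.card_coe_set_eq, Set.ncard_coe_finset, Nat.card_Icc]
  omega

end IsPartition

namespace MarkedSeq

variable {iSeq : ℕ → ℕ} {t h : ℕ}

theorem strictAntiOn (hmark : MarkedSeq l iSeq t) : StrictAntiOn iSeq (Set.Icc 1 t) :=
  fun a ha b hb hab => hmark.2.1 a b ha.1 hab hb.2

theorem odd_mult (hmark : MarkedSeq l iSeq t) (h1 : 1 ≤ h) (ht : h ≤ t) (h0 : iSeq h ≠ 0) :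
    Odd (mult l (iSeq h)) :=
  hmark.2.2.2.1 h h1 ht h0

theorem card_image_Ico (hmark : MarkedSeq l iSeq t) (ht : h ≤ t) :
    #((Ico 1 h).image iSeq) = h - 1 := by
  rw [card_image_of_injOn, Nat.card_Ico]
  refine hmark.strictAntiOn.injOn.mono fun k hk => ?_
  simp only [coe_Ico, Set.mem_Ico] at hk
  exact ⟨hk.1, by omega⟩

theorem mem_image_Ico_iff (hmark : MarkedSeq l iSeq t) (hsymp : IsSymplectic l) (h1 : 1 ≤ h)
    (ht : h ≤ t) (v : ℕ) : v ∈ (Ico 1 h).image iSeq ↔ iSeq h < v ∧ Odd (mult l v) := by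
  obtain ⟨-, hdec, -, hodd, hall⟩ := hmark
  rw [mem_image]
  constructor
  · rintro ⟨k, hk, rfl⟩
    rw [mem_Ico] at hk
    have hlt := hdec k h hk.1 hk.2 ht
    exact ⟨hlt, hodd k hk.1 (by omega) (by omega)⟩
  · rintro ⟨hv, hvodd⟩
    have hveven : Even v := by
      by_contra hv'
      exact Nat.not_odd_iff_even.mpr (hsymp v (Nat.not_even_iff_odd.mp hv')) hvodd
    obtain ⟨k, hk1, hkt, rfl⟩ := hall v (by omega) hveven hvodd
    refine ⟨k, mem_Ico.mpr ⟨hk1, lt_of_not_ge fun hhk => ?_⟩, rfl⟩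
    rcases hhk.eq_or_lt with rfl | hlt
    · exact hv.false
    · exact (hdec h k h1 hlt hkt).asymm hv

theorem nonempty_setOf_eq (hmark : MarkedSeq l iSeq t) (hz : EventuallyZero l) (h1 : 1 ≤ h)
    (ht : h ≤ t) : {j | 1 ≤ j ∧ l j = iSeq h}.Nonempty := by
  by_cases h0 : iSeq h = 0
  · exact h0 ▸ hz.nonempty_setOf_eq_zero
  · exact nonempty_setOf_eq_of_mult_ne_zero (hmark.odd_mult h1 ht h0).pos.ne'

end MarkedSeq

theorem jmin_jmax_parity_general (l iSeq : ℕ → ℕ) (t : ℕ)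
    (hpart : IsPartition l) (hzero : EventuallyZero l)
    (hsymp : IsSymplectic l) (hmark : MarkedSeq l iSeq t) :
    ∀ h, 1 ≤ h → h ≤ t →
      jminPart l (iSeq h) % 2 = h % 2 ∧
      (iSeq h ≠ 0 → jmaxPart l (iSeq h) % 2 = h % 2) := by
  intro h h1 ht
  have hne := hmark.nonempty_setOf_eq hzero h1 ht
  have hjmin : Even (jminPart l (iSeq h) - 1) ↔ Even (h - 1) := by
    rw [hpart.even_jminPart_sub_one_iff hne (hmark.mem_image_Ico_iff hsymp h1 ht),
      hmark.card_image_Ico ht]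
  have hjmin1 : 1 ≤ jminPart l (iSeq h) := (Nat.sInf_mem hne).1
  rw [Nat.even_iff, Nat.even_iff] at hjmin
  refine ⟨by omega, fun h0 => ?_⟩
  have hmult := hpart.mult_add_jminPart hne (hzero.bddAbove_setOf_eq_s9 h0)
  have hodd := Nat.odd_iff.mp (hmark.odd_mult h1 ht h0)
  omega

/-- for `h = 1, ..., t`, `j_min(i_h) ≡ h mod 2` and, if `i_h ≠ 0`,
`j_max(i_h) ≡ h mod 2`. -/
theorem jmin_jmax_parity (m : ℕ) (l iSeq : ℕ → ℕ) (t : ℕ)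
    (hpart : IsPartition l) (hzero : EventuallyZero l) (hsum : psum l = 2 * m)
    (hsymp : IsSymplectic l) (hmark : MarkedSeq l iSeq t) :
    ∀ h, 1 ≤ h → h ≤ t →
      jminPart l (iSeq h) % 2 = h % 2 ∧
      (iSeq h ≠ 0 → jmaxPart l (iSeq h) % 2 = h % 2) :=
  jmin_jmax_parity_general l iSeq t hpart hzero hsymp hmark
end
end

section
/- Let λ be a special orthogonal partition of 2m. Define P^+(λ) as the set of odd indices j ≥ 1 with λ_j odd and λ_{j-1} > λ_j (λ_0 = ∞), and P^-(λ) as the set of even indices j ≥ 2 with λ_j odd and λ_j > λ_{j+1}. Then |P^+(λ)| = |P^-(λ)|. -/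
open Classical

noncomputable section

/-! Group the parts into blocks `(λ_{2k-1}, λ_{2k})`, which by speciality have a common parity, and
call a drop `λ_{2k} > λ_{2k+1}` a cut. Between two consecutive cuts adjacent blocks meet in equal
parts, so the blocks of such a run all have the same parity. `P^+` consists of the first indices of
the odd runs and `P^-` of their last indices (every run ends, since the parts vanish eventually);
sending the start of a run to its end is a bijection. -/

section Runs

variable {S : Set ℕ} {D : ℕ → Prop}

/-- `D k` is a cut between `k` and `k + 1`. -/
def runStarts (S : Set ℕ) (D : ℕ → Prop) : Set ℕ := {a ∈ S | a = 0 ∨ D (a - 1)}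

def runEnds (S : Set ℕ) (D : ℕ → Prop) : Set ℕ := {b ∈ S | D b}

lemma mem_iff_mem_of_forall_not (hS : ∀ k, ¬ D k → (k ∈ S ↔ k + 1 ∈ S)) {a b : ℕ}
    (hab : a ≤ b) (hcut : ∀ k, a ≤ k → k < b → ¬ D k) : a ∈ S ↔ b ∈ S := by
  induction b, hab using Nat.le_induction with
  | base => rfl
  | succ n hn ih =>
    exact (ih fun k hk hkn => hcut k hk (by omega)).trans (hS n (hcut n hn (by omega)))

lemma sInf_setOf_le_and_eq_of_forall_not {a b : ℕ} (hab : a ≤ b) (hb : D b)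
    (hcut : ∀ k, a ≤ k → k < b → ¬ D k) : sInf {c | a ≤ c ∧ D c} = b :=
  le_antisymm (Nat.sInf_le ⟨hab, hb⟩)
    (le_csInf ⟨b, hab, hb⟩ fun c ⟨hac, hc⟩ => not_lt.1 fun hcb => hcut c hac hcb hc)

lemma findGreatest_eq_of_forall_not {a b : ℕ} (hab : a ≤ b) (ha : a = 0 ∨ D (a - 1))
    (hcut : ∀ k, a ≤ k → k < b → ¬ D k) :
    Nat.findGreatest (fun c => c = 0 ∨ D (c - 1)) b = a :=
  Nat.findGreatest_eq_iff.2 ⟨hab, fun _ => ha, fun k hak hkb hk =>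
    hk.elim (by omega) (hcut (k - 1) (by omega) (by omega))⟩

theorem ncard_runStarts_eq_ncard_runEnds (hS : ∀ k, ¬ D k → (k ∈ S ↔ k + 1 ∈ S))
    (hD : ∀ a ∈ S, ∃ b, a ≤ b ∧ D b) : (runStarts S D).ncard = (runEnds S D).ncard := by
  set f : ℕ → ℕ := fun a => sInf {c | a ≤ c ∧ D c}
  set g : ℕ → ℕ := Nat.findGreatest (fun c => c = 0 ∨ D (c - 1))
  have hf : ∀ a ∈ runStarts S D, f a ∈ runEnds S D ∧ g (f a) = a := by
    rintro a ⟨haS, ha⟩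
    obtain ⟨hab, hb⟩ : a ≤ f a ∧ D (f a) := Nat.sInf_mem (hD a haS)
    have hcut : ∀ k, a ≤ k → k < f a → ¬ D k := fun k hak hkb hk =>
      Nat.notMem_of_lt_sInf hkb ⟨hak, hk⟩
    exact ⟨⟨(mem_iff_mem_of_forall_not hS hab hcut).1 haS, hb⟩,
      findGreatest_eq_of_forall_not hab ha hcut⟩
  have hg : ∀ b ∈ runEnds S D, g b ∈ runStarts S D ∧ f (g b) = b := by
    rintro b ⟨hbS, hb⟩
    obtain ⟨hab, ha, hgreatest⟩ :=
      (Nat.findGreatest_eq_iff (P := fun c => c = 0 ∨ D (c - 1)) (m := g b)).1 rfl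
    have hcut : ∀ k, g b ≤ k → k < b → ¬ D k := fun k hak hkb hk =>
      hgreatest (n := k + 1) (by omega) hkb (Or.inr hk)
    exact ⟨⟨(mem_iff_mem_of_forall_not hS hab hcut).2 hbS,
      (eq_or_ne (g b) 0).elim Or.inl ha⟩,
      sInf_setOf_le_and_eq_of_forall_not hab hb hcut⟩
  have hbij : Set.BijOn f (runStarts S D) (runEnds S D) :=
    Set.InvOn.bijOn ⟨fun a ha => (hf a ha).2, fun b hb => (hg b hb).2⟩
      (fun a ha => (hf a ha).1) (fun b hb => (hg b hb).1)
  rw [← hbij.image_eq, hbij.injOn.ncard_image]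

end Runs

section Blocks

variable {l : ℕ → ℕ}

/-- Block `k ≥ 1` is the pair of indices `(2k-1, 2k)`. The cut after the empty block `0` encodes
the convention `λ_0 = ∞`. -/
def BlockCut (l : ℕ → ℕ) (k : ℕ) : Prop := k = 0 ∨ l (2 * k + 1) < l (2 * k)

def oddBlocks (l : ℕ → ℕ) : Set ℕ := {k | 1 ≤ k ∧ Odd (l (2 * k))}

lemma odd_iff_odd_of_isSpecial (hspec : IsSpecial l) {k : ℕ} (hk : 1 ≤ k) :
    Odd (l (2 * k - 1)) ↔ Odd (l (2 * k)) := by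
  simp only [Nat.odd_iff, hspec k hk]

lemma mem_oddBlocks_iff_succ_of_not_blockCut (hpart : IsPartition l) (hspec : IsSpecial l)
    (k : ℕ) (hk : ¬ BlockCut l k) : k ∈ oddBlocks l ↔ k + 1 ∈ oddBlocks l := by
  simp only [BlockCut, not_or, not_lt] at hk
  have hflat : l (2 * k + 1) = l (2 * k) := le_antisymm (hpart (2 * k) (by omega)) hk.2
  have hnext := odd_iff_odd_of_isSpecial hspec (k := k + 1) (by omega)
  rw [show 2 * (k + 1) - 1 = 2 * k + 1 by omega, hflat] at hnext
  exact and_congr (by omega) hnext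

lemma exists_blockCut_of_mem_oddBlocks (hpart : IsPartition l) (hspec : IsSpecial l)
    (hzero : EventuallyZero l) {a : ℕ} (ha : a ∈ oddBlocks l) : ∃ b, a ≤ b ∧ BlockCut l b := by
  by_contra! hcut
  obtain ⟨N, hN⟩ := hzero
  have hmem := (mem_iff_mem_of_forall_not (mem_oddBlocks_iff_succ_of_not_blockCut hpart hspec)
    (Nat.le_add_right a N) fun k hk _ => hcut k hk).1 ha
  have hvanish : l (2 * (a + N)) = 0 := hN _ (by omega)
  simp [oddBlocks, hvanish] at hmem

lemma PplusO_eq_image (hspec : IsSpecial l) :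
    PplusO l = (fun a => 2 * a - 1) '' runStarts (oddBlocks l) (BlockCut l) := by
  ext j
  simp only [PplusO, runStarts, oddBlocks, BlockCut, Set.mem_ofPred_eq, Set.mem_image]
  constructor
  · rintro ⟨⟨c, rfl⟩, hodd, hdrop⟩
    have hodd' := (odd_iff_odd_of_isSpecial hspec (k := c + 1) (by omega)).1
    rw [show 2 * (c + 1) - 1 = 2 * c + 1 by omega] at hodd'
    refine ⟨c + 1, ⟨⟨by omega, hodd' hodd⟩, Or.inr ?_⟩, by omega⟩
    simp only [Nat.add_sub_cancel] at hdrop ⊢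
    omega
  · rintro ⟨a, ⟨⟨ha, hodd⟩, hcut⟩, rfl⟩
    refine ⟨⟨a - 1, by omega⟩, (odd_iff_odd_of_isSpecial hspec ha).2 hodd, ?_⟩
    rw [show 2 * (a - 1) + 1 = 2 * a - 1 by omega, show 2 * (a - 1) = 2 * a - 1 - 1 by omega]
      at hcut
    omega

lemma PminusO_eq_image : PminusO l = (2 * ·) '' runEnds (oddBlocks l) (BlockCut l) := by
  ext j
  simp only [PminusO, runEnds, oddBlocks, BlockCut, Set.mem_ofPred_eq, Set.mem_image]
  constructor
  · rintro ⟨hj, ⟨b, rfl⟩, hodd, hdrop⟩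
    exact ⟨b, ⟨⟨by omega, by rwa [two_mul]⟩, Or.inr (by rwa [two_mul])⟩, two_mul b⟩
  · rintro ⟨b, ⟨⟨hb, hodd⟩, hcut⟩, rfl⟩
    exact ⟨by omega, even_two_mul b, hodd, by omega⟩

end Blocks

theorem PplusO_card_eq_PminusO_card_general (l : ℕ → ℕ) (hpart : IsPartition l)
    (hzero : EventuallyZero l) (hspec : IsSpecial l) :
    (PplusO l).ncard = (PminusO l).ncard := by
  have hinj : Set.InjOn (fun a => 2 * a - 1) (runStarts (oddBlocks l) (BlockCut l)) :=
    fun a ha b hb (hab : 2 * a - 1 = 2 * b - 1) => by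
      have := ha.1.1
      have := hb.1.1
      omega
  rw [PplusO_eq_image hspec, PminusO_eq_image, hinj.ncard_image,
    Set.ncard_image_of_injective _ (mul_right_injective₀ two_ne_zero)]
  exact ncard_runStarts_eq_ncard_runEnds (mem_oddBlocks_iff_succ_of_not_blockCut hpart hspec)
    fun a ha => exists_blockCut_of_mem_oddBlocks hpart hspec hzero ha

/-- for a special orthogonal partition of `2m`,
`|P^+(λ)| = |P^-(λ)|`. -/
theorem PplusO_card_eq_PminusO_card (m : ℕ) (l : ℕ → ℕ) (hpart : IsPartition l)
    (hzero : EventuallyZero l) (hsum : psum l = 2 * m)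
    (horth : IsOrthogonal l) (hspec : IsSpecial l) :
    (PplusO l).ncard = (PminusO l).ncard :=
  PplusO_card_eq_PminusO_card_general l hpart hzero hspec
end
end

section
/- Let λ₁ be a special symplectic partition of 2n₁ and λ₂ a special orthogonal partition of 2n₂. Say that index j is of good parity if λ_{1,j} is even and λ_{2,j} is odd. Define J^+ as the set of odd j ≥ 1 such that λ_{1,j} is even, λ_{2,j} is odd, and for some d ∈ {1,2} one has λ_{d,j-1} > λ_{d,j} (with λ_{d,0} = ∞); define J^- as the set of even j ≥ 1 such that λ_{1,j} is even, λ_{2,j} is odd, and for some d ∈ {1,2} one has λ_{d,j} > λ_{d,j+1}. Then |J^+| = |J^-|, and listing J^+ = {j⁺_1 < ... < j⁺_a} and J^- = {j⁻_1 < ... < j⁻_a}, one has j⁺_1 < j⁻_1 < j⁺_2 < ... < j⁺_a < j⁻_a. -/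
open Classical

noncomputable section

/-!
Call `k` a drop if `λ₁` or `λ₂` strictly decreases from index `k` to `k + 1` (index `0` is
always a drop). Specialness carries good parity from each odd index to the next one, and
between drops the parts do not change, so good parity is constant between consecutive even
drops. Hence the element of `J⁺ ∪ J⁻` following `j ∈ J⁺` is the first even drop after `j`,
which lies in `J⁻` (it exists since `λ₂` ends in zeros, which are not odd), and the element
preceding `j ∈ J⁻` is the index after the last even drop below `j`, which lies in `J⁺`.
Two disjoint finite sets related in this way interlace: the number of elements of `J⁺`
below `x` exceeds that of `J⁻` by one exactly when the last element below `x` is in `J⁺`.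
-/

def Interlace (P M : Set ℕ) : Prop :=
  ∃ (a : ℕ) (jp jm : ℕ → ℕ), P = jp '' Set.Iio a ∧ M = jm '' Set.Iio a ∧
    (∀ i, i < a → jp i < jm i) ∧ (∀ i, i + 1 < a → jm i < jp (i + 1))

section Interlace

variable {P M : Set ℕ}

open Nat Finset in
lemma Set.Finite.card_toFinset_eq_count (hP : P.Finite) {N : ℕ} (hN : ∀ s ∈ P, s < N) :
    #hP.toFinset = count (· ∈ P) N := by
  rw [count_eq_card_filter_range]
  congr 1
  ext s
  simpa using fun hs => hN s hs

open Nat Finset in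
lemma interlace_of_count_le (hdisj : Disjoint P M) (hP : P.Finite) (hM : M.Finite)
    (hcard : #hP.toFinset = #hM.toFinset)
    (hMP : ∀ x, count (· ∈ M) x ≤ count (· ∈ P) x)
    (hPM : ∀ x, count (· ∈ P) x ≤ count (· ∈ M) x + 1) : Interlace P M := by
  refine ⟨#hP.toFinset, nth (· ∈ P), nth (· ∈ M), (image_nth_Iio_card hP).symm,
    hcard ▸ (image_nth_Iio_card hM).symm, fun i hi => ?_, fun i hi => ?_⟩
  · have hi' : i < #hM.toFinset := hcard ▸ hi
    have hxM : nth (· ∈ M) i ∈ M := nth_mem_of_lt_card hM hi'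
    have hxP : nth (· ∈ M) i ∉ P := hdisj.notMem_of_mem_right hxM
    have hcount := hMP (nth (· ∈ M) i + 1)
    simp only [count_succ, count_nth_of_lt_card_finite (p := (· ∈ M)) hM hi', hxM, hxP, if_true,
      if_false] at hcount
    exact nth_lt_of_lt_count (by omega)
  · have hxP : nth (· ∈ P) (i + 1) ∈ P := nth_mem_of_lt_card hP hi
    have hxM : nth (· ∈ P) (i + 1) ∉ M := hdisj.notMem_of_mem_left hxP
    have hcount := hPM (nth (· ∈ P) (i + 1) + 1)
    simp only [count_succ, count_nth_of_lt_card_finite (p := (· ∈ P)) hP hi, hxM, hxP, if_true,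
      if_false] at hcount
    exact nth_lt_of_lt_count (by omega)

open Nat Set in
lemma count_mem_eq_add_ite (hdisj : Disjoint P M)
    (hnext : ∀ p ∈ P, ∃ m ∈ M, IsLeast ((P ∪ M) ∩ Ioi p) m)
    (hprev : ∀ m ∈ M, ∃ p ∈ P, IsGreatest ((P ∪ M) ∩ Iio m) p) (x : ℕ) :
    count (· ∈ P) x =
      count (· ∈ M) x + if ∃ p ∈ P, IsGreatest ((P ∪ M) ∩ Iio x) p then 1 else 0 := by
  induction x with
  | zero => simp [IsGreatest]
  | succ x ih =>
    rw [count_succ, count_succ, ih]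
    by_cases hxP : x ∈ P
    · have hxM : x ∉ M := hdisj.notMem_of_mem_left hxP
      have hopen : ¬ ∃ p ∈ P, IsGreatest ((P ∪ M) ∩ Iio x) p := by
        rintro ⟨p, hp, ⟨-, hpx⟩, hmax⟩
        obtain ⟨m, hm, ⟨-, hpm⟩, hmin⟩ := hnext p hp
        have hmx : m ≤ x := hmin ⟨Or.inl hxP, hpx⟩
        have hmx' : m ≠ x := fun h => hxM (h ▸ hm)
        exact absurd (hmax ⟨Or.inr hm, lt_of_le_of_ne hmx hmx'⟩) (not_le.2 hpm)
      have hclosed : ∃ p ∈ P, IsGreatest ((P ∪ M) ∩ Iio (x + 1)) p :=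
        ⟨x, hxP, ⟨Or.inl hxP, lt_add_one x⟩, fun s hs => Nat.lt_succ_iff.1 hs.2⟩
      simp [hxP, hxM, hopen, hclosed]
    by_cases hxM : x ∈ M
    · have hclosed : ¬ ∃ p ∈ P, IsGreatest ((P ∪ M) ∩ Iio (x + 1)) p := by
        rintro ⟨p, hp, ⟨-, hpx⟩, hmax⟩
        have hxp : x ≤ p := hmax ⟨Or.inr hxM, lt_add_one x⟩
        exact hxP (le_antisymm (Nat.lt_succ_iff.1 hpx) hxp ▸ hp)
      simp [hxP, hxM, hprev x hxM, hclosed]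
    · have hIio : (P ∪ M) ∩ Iio (x + 1) = (P ∪ M) ∩ Iio x := by
        ext s
        simp only [mem_inter_iff, mem_union, mem_Iio, Nat.lt_succ_iff_lt_or_eq]
        constructor
        · rintro ⟨hs, hsx | rfl⟩
          exacts [⟨hs, hsx⟩, absurd hs (not_or.2 ⟨hxP, hxM⟩)]
        · exact fun ⟨hs, hsx⟩ => ⟨hs, Or.inl hsx⟩
      simp [hxP, hxM, hIio]

open Nat Set in
theorem interlace_of_isLeast_of_isGreatest (hdisj : Disjoint P M) (hfin : (P ∪ M).Finite)
    (hnext : ∀ p ∈ P, ∃ m ∈ M, IsLeast ((P ∪ M) ∩ Ioi p) m)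
    (hprev : ∀ m ∈ M, ∃ p ∈ P, IsGreatest ((P ∪ M) ∩ Iio m) p) : Interlace P M := by
  have hcount := count_mem_eq_add_ite hdisj hnext hprev
  obtain ⟨N, hN⟩ := hfin.bddAbove
  have hbound : ∀ s ∈ P ∪ M, s < N + 1 := fun s hs => Nat.lt_succ_of_le (hN hs)
  have hend : ¬ ∃ p ∈ P, IsGreatest ((P ∪ M) ∩ Iio (N + 1)) p := by
    rintro ⟨p, hp, -, hmax⟩
    obtain ⟨m, hm, ⟨-, hpm⟩, -⟩ := hnext p hp
    exact absurd (hmax ⟨Or.inr hm, hbound m (Or.inr hm)⟩) (not_le.2 hpm)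
  have hP : P.Finite := hfin.subset subset_union_left
  have hM : M.Finite := hfin.subset subset_union_right
  refine interlace_of_count_le hdisj hP hM ?_ (fun x => ?_) (fun x => ?_)
  · rw [hP.card_toFinset_eq_count (fun s hs => hbound s (Or.inl hs)),
      hM.card_toFinset_eq_count (fun s hs => hbound s (Or.inr hs)), hcount, if_neg hend, add_zero]
  all_goals rw [hcount x]; split_ifs <;> omega

end Interlace

-- With the convention `λ_{d,0} = ∞`, both partitions drop at index `0`.
def DropsAt (l₁ l₂ : ℕ → ℕ) (k : ℕ) : Prop := k = 0 ∨ l₁ (k + 1) < l₁ k ∨ l₂ (k + 1) < l₂ k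

section EndoscopicIndices

variable {l₁ l₂ : ℕ → ℕ}

lemma goodIdx_iff_mod_two {j : ℕ} : GoodIdx l₁ l₂ j ↔ l₁ j % 2 = 0 ∧ l₂ j % 2 = 1 := by
  simp only [GoodIdx, Nat.even_iff, Nat.odd_iff]

lemma IsSpecial.mod_two_succ_eq {l : ℕ → ℕ} (hl : IsSpecial l) {k : ℕ} (hk : Odd k) :
    l (k + 1) % 2 = l k % 2 := by
  obtain ⟨c, rfl⟩ := hk
  simpa [show 2 * (c + 1) - 1 = 2 * c + 1 by omega, show 2 * (c + 1) = 2 * c + 1 + 1 by omega]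
    using (hl (c + 1) (by omega)).symm

lemma goodIdx_succ_iff_of_odd (hs1 : IsSpecial l₁) (hs2 : IsSpecial l₂) {k : ℕ} (hk : Odd k) :
    GoodIdx l₁ l₂ (k + 1) ↔ GoodIdx l₁ l₂ k := by
  rw [goodIdx_iff_mod_two, goodIdx_iff_mod_two, hs1.mod_two_succ_eq hk, hs2.mod_two_succ_eq hk]

lemma goodIdx_succ_iff_of_not_dropsAt (hp1 : IsPartition l₁) (hp2 : IsPartition l₂) {k : ℕ}
    (hk : ¬ DropsAt l₁ l₂ k) : GoodIdx l₁ l₂ (k + 1) ↔ GoodIdx l₁ l₂ k := by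
  simp only [DropsAt, not_or, not_lt] at hk
  obtain ⟨hk0, h1, h2⟩ := hk
  rw [GoodIdx, GoodIdx, le_antisymm (hp1 k (by omega)) h1, le_antisymm (hp2 k (by omega)) h2]

lemma goodIdx_iff_of_forall_not_dropsAt (hp1 : IsPartition l₁) (hp2 : IsPartition l₂)
    (hs1 : IsSpecial l₁) (hs2 : IsSpecial l₂) {i j : ℕ} (hij : i ≤ j)
    (hdrop : ∀ k, i ≤ k → k < j → Even k → ¬ DropsAt l₁ l₂ k) :
    GoodIdx l₁ l₂ j ↔ GoodIdx l₁ l₂ i := by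
  induction j, hij using Nat.le_induction with
  | base => rfl
  | succ k hik ih =>
    rw [← ih fun k' hik' hk'k => hdrop k' hik' (by omega)]
    rcases Nat.even_or_odd k with hk | hk
    · exact goodIdx_succ_iff_of_not_dropsAt hp1 hp2 (hdrop k hik (lt_add_one k) hk)
    · exact goodIdx_succ_iff_of_odd hs1 hs2 hk

lemma mem_Jplus_iff {j : ℕ} :
    j ∈ Jplus l₁ l₂ ↔ Odd j ∧ GoodIdx l₁ l₂ j ∧ DropsAt l₁ l₂ (j - 1) := by
  rcases j with _ | k
  · simp [Jplus]
  · simp [Jplus, DropsAt]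

lemma mem_Jminus_iff {j : ℕ} :
    j ∈ Jminus l₁ l₂ ↔ Even j ∧ j ≠ 0 ∧ GoodIdx l₁ l₂ j ∧ DropsAt l₁ l₂ j := by
  simp only [Jminus, DropsAt, gt_iff_lt]
  constructor
  · rintro ⟨h2, he, hg, hd⟩
    exact ⟨he, by omega, hg, Or.inr hd⟩
  · rintro ⟨he, h0, hg, hd⟩
    obtain ⟨c, rfl⟩ := he
    exact ⟨by omega, ⟨c, rfl⟩, hg, hd.resolve_left h0⟩

lemma GoodIdx.lt_of_forall_le_eq_zero {N j : ℕ} (hz : ∀ j, N ≤ j → l₂ j = 0)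
    (hg : GoodIdx l₁ l₂ j) : j < N :=
  not_le.1 fun hNj => Nat.not_odd_zero (hz j hNj ▸ hg.2)

lemma Jplus_disjoint_Jminus : Disjoint (Jplus l₁ l₂) (Jminus l₁ l₂) :=
  Set.disjoint_left.2 fun _ hp hm => Nat.not_even_iff_odd.2 hp.1 hm.2.1

lemma finite_Jplus_union_Jminus (hz2 : EventuallyZero l₂) :
    (Jplus l₁ l₂ ∪ Jminus l₁ l₂).Finite := by
  obtain ⟨N, hN⟩ := hz2
  refine (Set.finite_Iio N).subset fun j hj => ?_
  rcases hj with hj | hj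
  exacts [hj.2.1.lt_of_forall_le_eq_zero hN, hj.2.2.1.lt_of_forall_le_eq_zero hN]

lemma exists_isLeast_Jminus_of_mem_Jplus (hp1 : IsPartition l₁) (hp2 : IsPartition l₂)
    (hs1 : IsSpecial l₁) (hs2 : IsSpecial l₂) (hz2 : EventuallyZero l₂) {p : ℕ}
    (hp : p ∈ Jplus l₁ l₂) :
    ∃ m ∈ Jminus l₁ l₂, IsLeast ((Jplus l₁ l₂ ∪ Jminus l₁ l₂) ∩ Set.Ioi p) m := by
  obtain ⟨hpodd, hpgood, -⟩ := mem_Jplus_iff.1 hp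
  have hpodd' := Nat.odd_iff.1 hpodd
  have hex : ∃ m, Even m ∧ p < m ∧ DropsAt l₁ l₂ m := by
    by_contra! hno
    obtain ⟨N, hN⟩ := hz2
    have hgood : GoodIdx l₁ l₂ (max N p) :=
      (goodIdx_iff_of_forall_not_dropsAt hp1 hp2 hs1 hs2 (le_max_right N p)
        fun k hpk _ hk => hno k hk (by have := Nat.even_iff.1 hk; omega)).2 hpgood
    exact absurd (hgood.lt_of_forall_le_eq_zero hN) (not_lt.2 (le_max_left N p))
  obtain ⟨hmeven, hpm, hmdrop⟩ := Nat.find_spec hex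
  have hmgood : GoodIdx l₁ l₂ (Nat.find hex) :=
    (goodIdx_iff_of_forall_not_dropsAt hp1 hp2 hs1 hs2 hpm.le fun k hpk hkm hk hd =>
      Nat.find_min hex hkm ⟨hk, by have := Nat.even_iff.1 hk; omega, hd⟩).2 hpgood
  have hm : Nat.find hex ∈ Jminus l₁ l₂ := mem_Jminus_iff.2 ⟨hmeven, by omega, hmgood, hmdrop⟩
  refine ⟨Nat.find hex, hm, ⟨Or.inr hm, hpm⟩, ?_⟩
  rintro s ⟨hs | hs, hps : p < s⟩
  · obtain ⟨hsodd, -, hsdrop⟩ := mem_Jplus_iff.1 hs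
    have hsodd' := Nat.odd_iff.1 hsodd
    have := Nat.find_min' hex ⟨Nat.Odd.sub_odd hsodd odd_one, by omega, hsdrop⟩
    omega
  · obtain ⟨hseven, -, -, hsdrop⟩ := mem_Jminus_iff.1 hs
    exact Nat.find_min' hex ⟨hseven, hps, hsdrop⟩

lemma exists_isGreatest_Jplus_of_mem_Jminus (hp1 : IsPartition l₁) (hp2 : IsPartition l₂)
    (hs1 : IsSpecial l₁) (hs2 : IsSpecial l₂) {m : ℕ} (hm : m ∈ Jminus l₁ l₂) :
    ∃ p ∈ Jplus l₁ l₂, IsGreatest ((Jplus l₁ l₂ ∪ Jminus l₁ l₂) ∩ Set.Iio m) p := by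
  obtain ⟨hmeven, hm0, hmgood, -⟩ := mem_Jminus_iff.1 hm
  set Q : ℕ → Prop := fun k => Even k ∧ DropsAt l₁ l₂ k
  set k := Nat.findGreatest Q (m - 1)
  obtain ⟨hkeven, hkdrop⟩ : Q k :=
    Nat.findGreatest_spec (P := Q) (Nat.zero_le _) ⟨⟨0, rfl⟩, Or.inl rfl⟩
  have hkm : k + 1 < m := by
    have := Nat.findGreatest_le (P := Q) (m - 1)
    have := Nat.even_iff.1 hkeven
    have := Nat.even_iff.1 hmeven
    omega
  have hpgood : GoodIdx l₁ l₂ (k + 1) :=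
    (goodIdx_iff_of_forall_not_dropsAt hp1 hp2 hs1 hs2 hkm.le fun k' hk' hk'm hk'even hd =>
      Nat.findGreatest_is_greatest (P := Q) (n := m - 1) (by omega) (by omega)
        ⟨hk'even, hd⟩).1 hmgood
  have hp : k + 1 ∈ Jplus l₁ l₂ := mem_Jplus_iff.2 ⟨hkeven.add_one, hpgood, by simpa using hkdrop⟩
  refine ⟨k + 1, hp, ⟨Or.inl hp, hkm⟩, ?_⟩
  rintro s ⟨hs | hs, hsm : s < m⟩
  · obtain ⟨hsodd, -, hsdrop⟩ := mem_Jplus_iff.1 hs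
    have := Nat.le_findGreatest (P := Q) (show s - 1 ≤ m - 1 by omega)
      ⟨Nat.Odd.sub_odd hsodd odd_one, hsdrop⟩
    omega
  · obtain ⟨hseven, -, -, hsdrop⟩ := mem_Jminus_iff.1 hs
    have := Nat.le_findGreatest (P := Q) (show s ≤ m - 1 by omega)
      ⟨hseven, hsdrop⟩
    omega

end EndoscopicIndices

theorem Jplus_Jminus_interlace_general (l₁ l₂ : ℕ → ℕ)
    (hp1 : IsPartition l₁) (hspec1 : IsSpecial l₁)
    (hp2 : IsPartition l₂) (hz2 : EventuallyZero l₂) (hspec2 : IsSpecial l₂) :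
    ∃ (a : ℕ) (jp jm : ℕ → ℕ),
      Jplus l₁ l₂ = jp '' Set.Iio a ∧
      Jminus l₁ l₂ = jm '' Set.Iio a ∧
      (∀ i, i < a → jp i < jm i) ∧
      (∀ i, i + 1 < a → jm i < jp (i + 1)) :=
  interlace_of_isLeast_of_isGreatest Jplus_disjoint_Jminus (finite_Jplus_union_Jminus hz2)
    (fun _ hp => exists_isLeast_Jminus_of_mem_Jplus hp1 hp2 hspec1 hspec2 hz2 hp)
    (fun _ hm => exists_isGreatest_Jplus_of_mem_Jminus hp1 hp2 hspec1 hspec2 hm)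

/-- `|J^+| = |J^-|` and the elements interleave
`j⁺_1 < j⁻_1 < j⁺_2 < ... < j⁺_a < j⁻_a`. -/
theorem Jplus_Jminus_interlace (n₁ n₂ : ℕ) (l₁ l₂ : ℕ → ℕ)
    (hp1 : IsPartition l₁) (hz1 : EventuallyZero l₁) (hs1 : psum l₁ = 2 * n₁)
    (hsymp1 : IsSymplectic l₁) (hspec1 : IsSpecial l₁)
    (hp2 : IsPartition l₂) (hz2 : EventuallyZero l₂) (hs2 : psum l₂ = 2 * n₂)
    (horth2 : IsOrthogonal l₂) (hspec2 : IsSpecial l₂) :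
    ∃ (a : ℕ) (jp jm : ℕ → ℕ),
      Jplus l₁ l₂ = jp '' Set.Iio a ∧
      Jminus l₁ l₂ = jm '' Set.Iio a ∧
      (∀ i, i < a → jp i < jm i) ∧
      (∀ i, i + 1 < a → jm i < jp (i + 1)) :=
  Jplus_Jminus_interlace_general l₁ l₂ hp1 hspec1 hp2 hz2 hspec2
end
end
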